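/- arXiv:2307.06941 — 2 statements merged into one kernel-verified Lean document; each statement's English description precedes it below -/
import Mathlib

section
/- A player i is a null player in a game v (with v(∅) = 0) if and only if all Harsanyi dividends Δ_S of coalitions S containing i are zero. -/
open Finset

/-- The Harsanyi dividends of a game `v`, defined recursively by
`Δ_S = v(S) − Σ_{T ⊊ S, T ≠ ∅} Δ_T`. -/
noncomputable def dividend {ι : Type*} [DecidableEq ι]
    (v : Finset ι → ℝ) (S : Finset ι) : ℝ :=
  v S - ∑ T ∈ ((S.powerset.erase ∅).erase S).attach,
    dividend v T.1
termination_by S.card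
decreasing_by
  have hT := T.2
  simp only [Finset.mem_erase, Finset.mem_powerset] at hT
  exact Finset.card_lt_card (lt_of_le_of_ne hT.2.2 hT.1)

section Dividend

variable {ι : Type*} [DecidableEq ι] (v : Finset ι → ℝ)

lemma dividend_eq (S : Finset ι) :
    dividend v S = v S - ∑ T ∈ (S.powerset.erase ∅).erase S, dividend v T := by
  rw [dividend, Finset.sum_attach]

lemma dividend_empty : dividend v ∅ = v ∅ := by
  rw [dividend_eq]
  simp

variable {v}

lemma sum_powerset_dividend (hv : v ∅ = 0) (S : Finset ι) :
    ∑ T ∈ S.powerset, dividend v T = v S := by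
  rcases eq_or_ne S ∅ with rfl | hS
  · simp [dividend_empty, hv]
  have hS_mem : S ∈ S.powerset.erase ∅ := mem_erase.mpr ⟨hS, mem_powerset_self S⟩
  rw [← add_sum_erase _ _ (empty_mem_powerset S), ← add_sum_erase _ _ hS_mem,
    dividend_empty, hv, dividend_eq v S]
  ring

lemma sub_eq_sum_dividend_insert (hv : v ∅ = 0) {i : ι} {S : Finset ι} (hi : i ∉ S) :
    v (insert i S) - v S = ∑ U ∈ S.powerset, dividend v (insert i U) := by
  rw [← sum_powerset_dividend hv (insert i S), ← sum_powerset_dividend hv S,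
    sum_powerset_insert hi, add_sub_cancel_left]

/-- By strong induction on `S`: in the expansion of the marginal contribution
`v (insert i S) - v S`, every term except `dividend v (insert i S)` vanishes. -/
lemma dividend_insert_eq_zero (hv : v ∅ = 0) {i : ι}
    (hnull : ∀ S, i ∉ S → v (insert i S) = v S) (S : Finset ι) (hi : i ∉ S) :
    dividend v (insert i S) = 0 := by
  induction S using Finset.strongInduction with
  | _ S ih =>
    have hsum := sub_eq_sum_dividend_insert hv hi
    rw [hnull S hi, sub_self, sum_eq_single_of_mem S (mem_powerset_self S)] at hsum
    · exact hsum.symm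
    · intro U hUS hUne
      have hU : U ⊂ S := ssubset_of_subset_of_ne (mem_powerset.mp hUS) hUne
      exact ih U hU fun hiU => hi (hU.subset hiU)

end Dividend

/-- A player `i` is null in a game `v` (with `v(∅) = 0`) iff all Harsanyi
dividends of coalitions containing `i` are zero. -/
theorem null_player_iff_dividends_zero {ι : Type*} [Fintype ι] [DecidableEq ι]
    (v : Finset ι → ℝ) (hv : v ∅ = 0) (i : ι) :
    (∀ S : Finset ι, S ⊆ Finset.univ.erase i → v (insert i S) = v S) ↔
    (∀ S : Finset ι, i ∈ S → dividend v S = 0) := by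
  have h_subset : ∀ S : Finset ι, S ⊆ univ.erase i ↔ i ∉ S := by
    simp [subset_erase]
  simp only [h_subset]
  constructor
  · intro hnull S hiS
    rw [← insert_erase hiS]
    exact dividend_insert_eq_zero hv hnull _ (notMem_erase i S)
  · intro hdiv S hiS
    rw [← sub_eq_zero, sub_eq_sum_dividend_insert hv hiS]
    exact sum_eq_zero fun U _ => hdiv _ (mem_insert_self i U)
end

section
/- Theorem 4.2 (Maximal sparsity implies equivalence): If all counterfactuals in a finite set X' are maximally sparse for the query instance x, then the Bin-CF-SHAP values (average over x' ∈ X' of the Shapley values of the single-reference games v_{x'}(S) = F(⟨x_S, x'_{F\S}⟩)) coincide with the Norm-CF-Freq explanation ψ̂_i = (1/|X'|) Σ_{x' ∈ X'} 𝟙[x_i ≠ x'_i] / |{j : x_j ≠ x'_j}|. -/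
/-!
Under maximal sparsity, the single-reference game `S ↦ F ⟨x_S, x'_{F∖S}⟩` of a counterfactual
`x'` is the hitting game of the set `C` of features where `x` and `x'` differ: restricting `S`
to `C` does not change the blend, so the game is `F x' = 0` when `S` misses `C`, and any nonempty
part of `C` already flips `F` to `1`. By linearity of the Shapley value it remains to compute the
Shapley values of a hitting game. Features outside `C` are null players; a feature `i ∈ C` is
pivotal exactly for the coalitions `S ⊆ Cᶜ`, and their Shapley weights add up to `1 / |C|` by the
identity `∑_{s ≤ n} C(n, s) / C(M, s) = (M + 1) / (M + 1 - n)`, a reindexed hockey-stick identity.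
-/

open Finset

noncomputable def shapley {ι : Type*} [Fintype ι] [DecidableEq ι]
    (v : Finset ι → ℝ) (i : ι) : ℝ :=
  ∑ S ∈ (Finset.univ.erase i).powerset,
    ((Fintype.card ι : ℝ)⁻¹ * ((Fintype.card ι - 1).choose S.card : ℝ)⁻¹) *
      (v (insert i S) - v S)

/-- `blend x x' S = ⟨x_S, x'_{F∖S}⟩`: the input taking `x`'s values on features
in `S` and `x'`'s values elsewhere. -/
def blend {m : ℕ} (x x' : Fin m → ℝ) (S : Finset (Fin m)) : Fin m → ℝ :=
  fun i => if i ∈ S then x i else x' i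

namespace Nat

theorem sum_range_choose_sub_choose_sub {n M : ℕ} (h : n ≤ M) :
    ∑ s ∈ range (n + 1), (M - s).choose (M - n) = (M + 1).choose n := by
  rw [← sum_range_reflect]
  calc ∑ j ∈ range (n + 1), (M - (n + 1 - 1 - j)).choose (M - n)
      = ∑ j ∈ range (n + 1), (j + (M - n)).choose (M - n) :=
        sum_congr rfl fun j hj => by rw [mem_range] at hj; congr 1; omega
    _ = (M + 1).choose n := by
        rw [sum_range_add_choose, ← choose_symm (by omega)]; congr 1 <;> omega

theorem sum_choose_div_choose {n M : ℕ} (h : n ≤ M) :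
    ∑ s ∈ range (n + 1), (n.choose s : ℝ) / M.choose s = (M + 1) / (M + 1 - n) := by
  have hMn : (M.choose n : ℝ) ≠ 0 := by exact_mod_cast (choose_pos h).ne'
  have hterm : ∀ s ∈ range (n + 1),
      (n.choose s : ℝ) / M.choose s = (M - s).choose (M - n) / M.choose n := by
    intro s hs
    rw [mem_range, Nat.lt_succ_iff] at hs
    have hMs : (M.choose s : ℝ) ≠ 0 := by exact_mod_cast (choose_pos (hs.trans h)).ne'
    have hmul := choose_mul (n := M) hs
    rw [choose_symm_of_eq_add (by omega : M - s = (n - s) + (M - n))] at hmul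
    rw [div_eq_div_iff hMs hMn]
    exact_mod_cast (Nat.mul_comm _ _).trans (hmul.trans (Nat.mul_comm _ _))
  have hsucc : ((M + 1).choose n : ℝ) * (M + 1 - n) = M.choose n * (M + 1) := by
    have := choose_mul_succ_eq M n
    rw [← Nat.cast_add_one, ← Nat.cast_sub (by omega : n ≤ M + 1)]
    exact_mod_cast this.symm
  have hpos : (M + 1 - n : ℝ) ≠ 0 := by
    have : (n : ℝ) ≤ M := by exact_mod_cast h
    linarith
  rw [sum_congr rfl hterm, ← sum_div, div_eq_div_iff hMn hpos, ← Nat.cast_sum,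
    sum_range_choose_sub_choose_sub h, hsucc, mul_comm]

end Nat

section Shapley

variable {ι : Type*} [Fintype ι] [DecidableEq ι]

theorem shapley_const_mul_sum {κ : Type*} [Fintype κ] (a : ℝ) (v : κ → Finset ι → ℝ) (i : ι) :
    shapley (fun S => a * ∑ k, v k S) i = a * ∑ k, shapley (v k) i := by
  simp only [shapley, ← mul_sub, ← sum_sub_distrib, mul_sum]
  rw [sum_comm]
  exact sum_congr rfl fun k _ => sum_congr rfl fun S _ => by ring

def hittingGame (C S : Finset ι) : ℝ :=
  if Disjoint S C then 0 else 1

theorem shapley_hittingGame_of_notMem {C : Finset ι} {i : ι} (hi : i ∉ C) :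
    shapley (hittingGame C) i = 0 :=
  sum_eq_zero fun S _ => by simp [hittingGame, disjoint_insert_left, hi]

theorem shapley_hittingGame_of_mem {C : Finset ι} {i : ι} (hi : i ∈ C) :
    shapley (hittingGame C) i = 1 / #C := by
  obtain ⟨M, hM⟩ : ∃ M, Fintype.card ι = M + 1 :=
    Nat.exists_eq_add_one.2 (Fintype.card_pos_iff.2 ⟨i⟩)
  have hC : #C ≤ M + 1 := hM ▸ card_le_univ C
  have hCpos : 0 < #C := card_pos.2 ⟨i, hi⟩
  have hmarginal : ∀ S, hittingGame C (insert i S) - hittingGame C S =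
      if S ⊆ Cᶜ then 1 else 0 := fun S => by
    simp only [hittingGame, disjoint_insert_left, hi, not_true_eq_false, false_and, if_false,
      subset_compl_iff_disjoint_right]
    split_ifs <;> norm_num
  have hpowerset : {S ∈ (univ.erase i).powerset | S ⊆ Cᶜ} = Cᶜ.powerset := by
    ext S
    simp only [mem_filter, mem_powerset, and_iff_right_iff_imp]
    exact fun hS j hj => mem_erase.2 ⟨fun hji => mem_compl.1 (hS hj) (hji ▸ hi), mem_univ j⟩
  simp only [shapley, hmarginal, mul_ite, mul_one, mul_zero]
  rw [← sum_filter, hpowerset, hM, Nat.add_sub_cancel,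
    sum_powerset_apply_card (fun s => ((M + 1 : ℕ) : ℝ)⁻¹ * (M.choose s : ℝ)⁻¹), card_compl, hM]
  have hterm : ∀ s ∈ range (M + 1 - #C + 1),
      (M + 1 - #C).choose s • (((M + 1 : ℕ) : ℝ)⁻¹ * (M.choose s : ℝ)⁻¹) =
        ((M + 1 : ℕ) : ℝ)⁻¹ * ((M + 1 - #C).choose s / M.choose s) := fun s _ => by
    rw [nsmul_eq_mul]; ring
  rw [sum_congr rfl hterm, ← mul_sum, Nat.sum_choose_div_choose (by omega), Nat.cast_sub hC]
  have hCne : (#C : ℝ) ≠ 0 := by exact_mod_cast hCpos.ne'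
  push_cast
  rw [sub_sub_cancel]
  field_simp

theorem shapley_hittingGame (C : Finset ι) (i : ι) :
    shapley (hittingGame C) i = (if i ∈ C then 1 else 0) / #C := by
  by_cases hi : i ∈ C
  · rw [shapley_hittingGame_of_mem hi, if_pos hi]
  · rw [shapley_hittingGame_of_notMem hi, if_neg hi, zero_div]

end Shapley

section Counterfactual

variable {m : ℕ}

theorem blend_inter_filter_ne (x x' : Fin m → ℝ) (S : Finset (Fin m)) :
    blend x x' (S ∩ univ.filter fun j => x j ≠ x' j) = blend x x' S := by
  funext j
  by_cases hj : x j = x' j <;> simp [blend, hj]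

theorem blend_empty (x x' : Fin m → ℝ) : blend x x' ∅ = x' := rfl

theorem apply_blend_eq_hittingGame {F : (Fin m → ℝ) → ℝ} (hbin : ∀ z, F z = 0 ∨ F z = 1)
    {x x' : Fin m → ℝ} (hx' : F x' = 0)
    (hms : ∀ S : Finset (Fin m), S ⊆ univ.filter (fun i => x i ≠ x' i) → S ≠ ∅ →
      F (blend x x' S) ≠ F x')
    (S : Finset (Fin m)) :
    F (blend x x' S) = hittingGame (univ.filter fun i => x i ≠ x' i) S := by
  rw [← blend_inter_filter_ne, hittingGame]
  split_ifs with hS <;> rw [disjoint_iff_inter_eq_empty] at hS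
  · rw [hS, blend_empty, hx']
  · exact (hbin _).resolve_left (hx' ▸ hms _ inter_subset_right hS)

end Counterfactual

theorem binCFSHAP_eq_normCFFreq_of_maximally_sparse_general {m : ℕ}
    (F : (Fin m → ℝ) → ℝ) (hbin : ∀ z, F z = 0 ∨ F z = 1)
    (x : Fin m → ℝ)
    {κ : Type*} [Fintype κ] (cf : κ → Fin m → ℝ)
    (hcf : ∀ k, F (cf k) = 0)
    (hms : ∀ k, ∀ S : Finset (Fin m),
      S ⊆ Finset.univ.filter (fun i => x i ≠ cf k i) → S ≠ ∅ →
      F (blend x (cf k) S) ≠ F (cf k)) :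
    ∀ i : Fin m,
      shapley (fun S => (Fintype.card κ : ℝ)⁻¹ * ∑ k, F (blend x (cf k) S)) i =
      (Fintype.card κ : ℝ)⁻¹ * ∑ k, (if x i ≠ cf k i then 1 else 0) /
        ((Finset.univ.filter (fun j => x j ≠ cf k j)).card : ℝ) := by
  intro i
  simp only [apply_blend_eq_hittingGame hbin (hcf _) (hms _)]
  rw [shapley_const_mul_sum]
  simp only [shapley_hittingGame, mem_filter, mem_univ, true_and]

/-- Stmt 11 (Theorem 4.2): if all counterfactuals in the finite set
`{cf k | k : κ}` are maximally sparse for `x`, then the Bin-CF-SHAP values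
(Shapley values of `v(S) = (1/|X'|) Σ_{x'} F(⟨x_S, x'_{F∖S}⟩)`) coincide with
the Norm-CF-Freq explanation
`ψ̂_i = (1/|X'|) Σ_{x'} 𝟙[x_i ≠ x'_i] / |{j : x_j ≠ x'_j}|`. -/
theorem binCFSHAP_eq_normCFFreq_of_maximally_sparse {m : ℕ}
    (F : (Fin m → ℝ) → ℝ) (hbin : ∀ z, F z = 0 ∨ F z = 1)
    (x : Fin m → ℝ) (hx : F x = 1)
    {κ : Type*} [Fintype κ] [Nonempty κ] (cf : κ → Fin m → ℝ)
    (hcf : ∀ k, F (cf k) = 0)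
    (hms : ∀ k, ∀ S : Finset (Fin m),
      S ⊆ Finset.univ.filter (fun i => x i ≠ cf k i) → S ≠ ∅ →
      F (blend x (cf k) S) ≠ F (cf k)) :
    ∀ i : Fin m,
      shapley (fun S => (Fintype.card κ : ℝ)⁻¹ * ∑ k, F (blend x (cf k) S)) i =
      (Fintype.card κ : ℝ)⁻¹ * ∑ k, (if x i ≠ cf k i then 1 else 0) /
        ((Finset.univ.filter (fun j => x j ≠ cf k j)).card : ℝ) :=
  binCFSHAP_eq_normCFFreq_of_maximally_sparse_general F hbin x cf hcf hms
end
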